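/- arXiv:2009.13899 — 2 statements merged into one kernel-verified Lean document; each statement's English description precedes it below -/
import Mathlib

section
/- Let Γ be a Hermitian positive semidefinite matrix of size m×m, and let F = Γ(I+Γ)⁻¹, which is Hermitian with 0 ⪯ F ≺ I. Then for g(U) = log det(I + U) − Tr(U) + Tr((I+U)·F), the maximizer of g over Hermitian positive semidefinite U is U* = F(I−F)⁻¹ = Γ, and the maximal value is log det(I + Γ). -/
open Matrix ComplexOrder

private lemma posDef_conj_aux {n : ℕ} {Q R : Matrix (Fin n) (Fin n) ℂ} (hQ : Q.PosDef)
    (hR : R.IsHermitian) (hRu : IsUnit R) : (R * Q * R).PosDef := by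
  refine Matrix.PosDef.of_dotProduct_mulVec_pos ?_ ?_
  · have := isHermitian_conjTranspose_mul_mul R hQ.1
    rwa [hR.eq] at this
  · intro x hx
    have hx' : R *ᵥ x ≠ 0 := by
      intro h
      exact hx (Matrix.mulVec_injective_iff_isUnit.mpr hRu (by simpa using h))
    have h2 := hQ.dotProduct_mulVec_pos hx'
    have hrw : R * Q * R = Rᴴ * Q * R := by rw [hR.eq]
    rw [hrw]
    simpa only [star_mulVec, dotProduct_mulVec, vecMul_vecMul] using h2

private lemma trace_eq_sum_eigenvalues_aux {n : ℕ} {A : Matrix (Fin n) (Fin n) ℂ}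
    (hA : A.IsHermitian) : A.trace = ∑ i, (hA.eigenvalues i : ℂ) := by
  conv_lhs => rw [hA.spectral_theorem]
  rw [Unitary.conjStarAlgAut_apply, Matrix.trace_mul_cycle]
  have : (star (hA.eigenvectorUnitary : Matrix (Fin n) (Fin n) ℂ)) *
      (hA.eigenvectorUnitary : Matrix (Fin n) (Fin n) ℂ) = 1 :=
    (Matrix.mem_unitaryGroup_iff').mp hA.eigenvectorUnitary.2
  rw [this, one_mul, Matrix.trace_diagonal]
  rfl

private lemma logdet_le_trace_aux {n : ℕ} {A : Matrix (Fin n) (Fin n) ℂ} (hA : A.PosDef) :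
    Real.log A.det.re ≤ A.trace.re - n := by
  have hdet : A.det = ((∏ i, hA.1.eigenvalues i : ℝ) : ℂ) := by
    rw [hA.1.det_eq_prod_eigenvalues]; push_cast; rfl
  have htr : A.trace = ((∑ i, hA.1.eigenvalues i : ℝ) : ℂ) := by
    rw [trace_eq_sum_eigenvalues_aux hA.1]; push_cast; rfl
  rw [hdet, htr, Complex.ofReal_re, Complex.ofReal_re]
  have hpos : ∀ i ∈ (Finset.univ : Finset (Fin n)), hA.1.eigenvalues i ≠ 0 :=
    fun i _ => (hA.eigenvalues_pos i).ne'
  rw [Real.log_prod hpos]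
  have : ∀ i ∈ (Finset.univ : Finset (Fin n)),
      Real.log (hA.1.eigenvalues i) ≤ hA.1.eigenvalues i - 1 :=
    fun i _ => Real.log_le_sub_one_of_pos (hA.eigenvalues_pos i)
  calc ∑ i, Real.log (hA.1.eigenvalues i) ≤ ∑ i, (hA.1.eigenvalues i - 1) :=
        Finset.sum_le_sum this
    _ = (∑ i, hA.1.eigenvalues i) - n := by
        rw [Finset.sum_sub_distrib]; simp

open scoped MatrixOrder in
private lemma sqrt_exists_aux {n : ℕ} {A : Matrix (Fin n) (Fin n) ℂ} (hA : A.PosSemidef) :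
    ∃ R : Matrix (Fin n) (Fin n) ℂ, R.PosSemidef ∧ R * R = A :=
  ⟨CFC.sqrt A, (CFC.sqrt_nonneg A).posSemidef, CFC.sqrt_mul_sqrt_self A hA.nonneg⟩

/-- Matrix-form LDT: for Γ ⪰ 0 and F = Γ(I+Γ)⁻¹, the surrogate
g(U) = log det(I+U) − Tr(U) + Tr((I+U)F) is maximized over Hermitian PSD U at
U* = F(I−F)⁻¹ = Γ, with maximal value log det(I+Γ). -/
theorem stmt8 (n : ℕ) (Γ : Matrix (Fin n) (Fin n) ℂ) (hΓ : Γ.PosSemidef)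
    (F : Matrix (Fin n) (Fin n) ℂ) (hF : F = Γ * (1 + Γ)⁻¹) :
    IsGreatest {x : ℝ | ∃ U : Matrix (Fin n) (Fin n) ℂ, U.PosSemidef ∧
        x = Real.log ((1 + U).det.re) - U.trace.re + ((1 + U) * F).trace.re}
      (Real.log ((1 + Γ).det.re)) ∧
    F * (1 - F)⁻¹ = Γ := by
  set P : Matrix (Fin n) (Fin n) ℂ := 1 + Γ with hPdef
  have hP : P.PosDef := Matrix.PosDef.one.add_posSemidef hΓ
  have hPd : IsUnit P.det := hP.det_pos.ne'.isUnit
  have hPinv : P * P⁻¹ = 1 := Matrix.mul_nonsing_inv P hPd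
  have hinvP : P⁻¹ * P = 1 := Matrix.nonsing_inv_mul P hPd
  have hF1 : 1 - F = P⁻¹ := by
    rw [hF, ← hPinv]
    calc P * P⁻¹ - Γ * P⁻¹ = (P - Γ) * P⁻¹ := by rw [Matrix.sub_mul]
      _ = P⁻¹ := by rw [hPdef]; simp
  have hFeq : F = 1 - P⁻¹ := by
    rw [← hF1, sub_sub_cancel]
  have hPF : ∀ Q : Matrix (Fin n) (Fin n) ℂ, Q * F = Q - Q * P⁻¹ := by
    intro Q; rw [hFeq, Matrix.mul_sub, mul_one]
  constructor
  · constructor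
    · -- membership: U = Γ
      refine ⟨Γ, hΓ, ?_⟩
      have h1 : P * F = Γ := by
        rw [hPF, hPinv, hPdef, add_sub_cancel_left]
      rw [← hPdef, h1]
      have htr : Γ.trace.re - Γ.trace.re = 0 := sub_self _
      ring
    · -- upper bound
      rintro x ⟨U, hU, rfl⟩
      set Q : Matrix (Fin n) (Fin n) ℂ := 1 + U with hQdef
      have hQ : Q.PosDef := Matrix.PosDef.one.add_posSemidef hU
      have hS : (P⁻¹).PosDef := hP.inv
      obtain ⟨R, hRps, hRR⟩ := sqrt_exists_aux hS.posSemidef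
      have hSd : (P⁻¹).det ≠ 0 := hS.det_pos.ne'
      have hRd : R.det ≠ 0 := by
        intro h
        apply hSd
        rw [← hRR, Matrix.det_mul, h, mul_zero]
      have hRu : IsUnit R := (Matrix.isUnit_iff_isUnit_det R).mpr hRd.isUnit
      have hA : (R * Q * R).PosDef := posDef_conj_aux hQ hRps.1 hRu
      -- trace identity
      have htrA : (R * Q * R).trace = (Q * P⁻¹).trace := by
        rw [Matrix.trace_mul_cycle, hRR, Matrix.trace_mul_comm]
      -- det identity
      have hdetA : (R * Q * R).det = (P.det)⁻¹ * Q.det := by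
        rw [Matrix.det_mul, Matrix.det_mul, mul_comm R.det Q.det, mul_assoc, ← Matrix.det_mul,
          hRR, Matrix.det_nonsing_inv, mul_comm, Ring.inverse_eq_inv']
      -- real parts
      obtain ⟨hPre, hPim⟩ := Complex.pos_iff.mp hP.det_pos
      obtain ⟨hQre, hQim⟩ := Complex.pos_iff.mp hQ.det_pos
      have hPc : P.det = ((P.det.re : ℝ) : ℂ) := by
        apply Complex.ext <;> simp [← hPim]
      have hQc : Q.det = ((Q.det.re : ℝ) : ℂ) := by
        apply Complex.ext <;> simp [← hQim]
      have hdetAre : (R * Q * R).det.re = (P.det.re)⁻¹ * Q.det.re := by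
        rw [hdetA, hPc, hQc, ← Complex.ofReal_inv, ← Complex.ofReal_mul, Complex.ofReal_re]
        simp
      have key := logdet_le_trace_aux hA
      rw [hdetAre] at key
      have htrAre : (R * Q * R).trace.re = (Q * P⁻¹).trace.re := by rw [htrA]
      rw [htrAre] at key
      have hlog : Real.log ((P.det.re)⁻¹ * Q.det.re)
          = Real.log Q.det.re - Real.log P.det.re := by
        rw [Real.log_mul (inv_ne_zero hPre.ne') hQre.ne', Real.log_inv]; ring
      rw [hlog] at key
      have hUt : U.trace.re = Q.trace.re - n := by
        have : Q.trace = U.trace + n := by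
          rw [hQdef, Matrix.trace_add, Matrix.trace_one]
          simp [add_comm]
        rw [this]; simp
      show Real.log Q.det.re - U.trace.re + (Q * F).trace.re ≤ Real.log P.det.re
      rw [hPF Q, Matrix.trace_sub, Complex.sub_re, hUt]
      linarith
  · -- F(1-F)⁻¹ = Γ
    rw [hF1, Matrix.nonsing_inv_nonsing_inv P hPd, hF, mul_assoc, hinvP, mul_one]
end

section
/- Let Γ and U be Hermitian PSD m×m matrices. Then log det(I + Γ) ≥ log det(I + U) − Tr(U) + Tr((I + U)·Γ·(I + Γ)⁻¹), with equality if and only if U = Γ. -/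
/-!
Put `A = 1 + Γ` and `B = 1 + U`, both positive definite. Since `Γ A⁻¹ = 1 - A⁻¹`, the trace term
equals `n + tr U - tr (B A⁻¹)`, so the claim reads `log det B - log det A ≤ tr (B A⁻¹) - n`, with
equality iff `B = A`. Factoring `A⁻¹ = Sᴴ S` with `S` invertible, this is `log det M ≤ tr M - n`
for the positive definite congruent matrix `M = S B Sᴴ`, which holds eigenvalue by eigenvalue by
`log λ ≤ λ - 1`; equality forces every eigenvalue to be `1`, i.e. `M = 1`, i.e. `B = A`.
-/

open Matrix ComplexOrder

theorem Real.log_eq_sub_one_iff {x : ℝ} (hx : 0 < x) : Real.log x = x - 1 ↔ x = 1 := by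
  refine ⟨fun h => ?_, fun h => by simp [h]⟩
  by_contra hne
  exact (Real.log_lt_sub_one_of_pos hx hne).ne h

namespace Matrix

variable {ι 𝕜 : Type*} [Fintype ι] [DecidableEq ι] [RCLike 𝕜]

theorem IsHermitian.re_trace_eq_sum_eigenvalues {M : Matrix ι ι 𝕜} (hM : M.IsHermitian) :
    RCLike.re M.trace = ∑ i, hM.eigenvalues i := by
  simp [hM.trace_eq_sum_eigenvalues]

theorem PosDef.log_re_det_eq_sum_log_eigenvalues {M : Matrix ι ι 𝕜} (hM : M.PosDef) :
    Real.log (RCLike.re M.det) = ∑ i, Real.log (hM.1.eigenvalues i) := by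
  rw [hM.1.det_eq_prod_eigenvalues, ← RCLike.ofReal_prod, RCLike.ofReal_re,
    Real.log_prod fun i _ => (hM.eigenvalues_pos i).ne']

theorem IsHermitian.eq_one_of_eigenvalues_eq_one {M : Matrix ι ι 𝕜} (hM : M.IsHermitian)
    (h : ∀ i, hM.eigenvalues i = 1) : M = 1 := by
  rw [hM.spectral_theorem]
  simp [Function.comp_def, h]

theorem PosDef.log_det_le_trace_sub_card {M : Matrix ι ι 𝕜} (hM : M.PosDef) :
    Real.log (RCLike.re M.det) ≤ RCLike.re M.trace - Fintype.card ι ∧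
      (Real.log (RCLike.re M.det) = RCLike.re M.trace - Fintype.card ι ↔ M = 1) := by
  have hterm : ∀ i ∈ Finset.univ, Real.log (hM.1.eigenvalues i) ≤ hM.1.eigenvalues i - 1 :=
    fun i _ => Real.log_le_sub_one_of_pos (hM.eigenvalues_pos i)
  have hsum : RCLike.re M.trace - Fintype.card ι = ∑ i, (hM.1.eigenvalues i - 1) := by
    simp [hM.1.re_trace_eq_sum_eigenvalues, Finset.sum_sub_distrib]
  rw [hM.log_re_det_eq_sum_log_eigenvalues, hsum]
  refine ⟨Finset.sum_le_sum hterm, fun h => ?_, ?_⟩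
  · rw [Finset.sum_eq_sum_iff_of_le hterm] at h
    exact hM.1.eq_one_of_eigenvalues_eq_one fun i =>
      (Real.log_eq_sub_one_iff (hM.eigenvalues_pos i)).mp (h i (Finset.mem_univ i))
  · rintro rfl
    rw [← hM.log_re_det_eq_sum_log_eigenvalues, ← hsum]
    simp

theorem mul_inv_one_add_eq_one_sub {R : Type*} [CommRing R] {Γ : Matrix ι ι R}
    (h : IsUnit (1 + Γ).det) : Γ * (1 + Γ)⁻¹ = 1 - (1 + Γ)⁻¹ := by
  rw [eq_sub_iff_add_eq, ← add_one_mul, add_comm, mul_nonsing_inv _ h]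

open scoped MatrixOrder in
theorem PosDef.exists_isUnit_conjTranspose_mul_self_eq {A : Matrix ι ι 𝕜} (hA : A.PosDef) :
    ∃ S : Matrix ι ι 𝕜, IsUnit S ∧ Sᴴ * S = A := by
  obtain ⟨S, hS⟩ := CStarAlgebra.nonneg_iff_eq_star_mul_self.mp hA.posSemidef.nonneg
  refine ⟨S, ?_, hS.symm⟩
  have hdet : IsUnit (star S.det * S.det) := by
    rw [← det_conjTranspose, ← det_mul, ← star_eq_conjTranspose, ← hS]
    exact hA.det_pos.ne'.isUnit
  exact (isUnit_iff_isUnit_det S).mpr (isUnit_of_mul_isUnit_right hdet)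

theorem PosDef.log_det_sub_log_det_le_trace_mul_inv_sub_card {A B : Matrix ι ι 𝕜}
    (hA : A.PosDef) (hB : B.PosDef) :
    Real.log (RCLike.re B.det) - Real.log (RCLike.re A.det)
        ≤ RCLike.re (B * A⁻¹).trace - Fintype.card ι ∧
      (Real.log (RCLike.re B.det) - Real.log (RCLike.re A.det)
        = RCLike.re (B * A⁻¹).trace - Fintype.card ι ↔ B = A) := by
  obtain ⟨S, hS, hSS⟩ := hA.inv.exists_isUnit_conjTranspose_mul_self_eq
  have hM : (S * B * Sᴴ).PosDef :=
    hB.mul_mul_conjTranspose_same (vecMul_injective_iff_isUnit.mpr hS)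
  obtain ⟨a, ha, hdetA⟩ := RCLike.pos_iff_exists_ofReal.mp hA.det_pos
  obtain ⟨b, hb, hdetB⟩ := RCLike.pos_iff_exists_ofReal.mp hB.det_pos
  have hdet : Real.log (RCLike.re (S * B * Sᴴ).det)
      = Real.log (RCLike.re B.det) - Real.log (RCLike.re A.det) := by
    have hdet_conj : (S * B * Sᴴ).det = B.det * (Sᴴ * S).det := by
      simp only [det_mul]; ring
    rw [hdet_conj, hSS, det_nonsing_inv, Ring.inverse_eq_inv',
      ← hdetA, ← hdetB, ← RCLike.ofReal_inv, ← RCLike.ofReal_mul]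
    simp only [RCLike.ofReal_re]
    rw [← div_eq_mul_inv, Real.log_div hb.ne' ha.ne']
  have htrace : (S * B * Sᴴ).trace = (B * A⁻¹).trace := by
    rw [trace_mul_cycle, trace_mul_comm, hSS]
  have hone : S * B * Sᴴ = 1 ↔ B = A := by
    have hSA : S * A * Sᴴ = 1 := hS.mul_left_injective <| by
      simp only [mul_assoc, hSS, mul_nonsing_inv _ hA.det_pos.ne'.isUnit, mul_one, one_mul]
    rw [← hSA, (isUnit_conjTranspose S).mpr hS |>.mul_left_inj, hS.mul_right_inj]
  rw [← hdet, ← htrace, ← hone]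
  exact hM.log_det_le_trace_sub_card

end Matrix

/-- LDT inequality: for Γ, U Hermitian PSD,
log det(I + Γ) ≥ log det(I + U) − Tr(U) + Tr((I + U)Γ(I + Γ)⁻¹),
with equality iff U = Γ. -/
theorem stmt9 (n : ℕ) (Γ U : Matrix (Fin n) (Fin n) ℂ)
    (hΓ : Γ.PosSemidef) (hU : U.PosSemidef) :
    Real.log ((1 + U).det.re) - U.trace.re + ((1 + U) * Γ * (1 + Γ)⁻¹).trace.re
      ≤ Real.log ((1 + Γ).det.re) ∧
    (Real.log ((1 + U).det.re) - U.trace.re + ((1 + U) * Γ * (1 + Γ)⁻¹).trace.re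
      = Real.log ((1 + Γ).det.re) ↔ U = Γ) := by
  have hA : (1 + Γ).PosDef := PosDef.one.add_posSemidef hΓ
  have hB : (1 + U).PosDef := PosDef.one.add_posSemidef hU
  have htrace : ((1 + U) * Γ * (1 + Γ)⁻¹).trace.re
      = n + U.trace.re - ((1 + U) * (1 + Γ)⁻¹).trace.re := by
    rw [mul_assoc, mul_inv_one_add_eq_one_sub hA.det_pos.ne'.isUnit, mul_sub, mul_one, trace_sub,
      trace_add, trace_one]
    simp
  obtain ⟨hle, hiff⟩ := hA.log_det_sub_log_det_le_trace_mul_inv_sub_card hB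
  simp only [RCLike.re_to_complex, Fintype.card_fin, add_right_inj] at hle hiff
  rw [htrace]
  exact ⟨by linarith, by rw [← hiff]; constructor <;> intro h <;> linarith⟩
end
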